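/- Let $f,g\ge0$ satisfy the two-weight weak-type hypothesis: $\|g\|_{L^{p_0,\infty}(u_2)}\le\|f\|_{L^{p_0}(u_1)}$ for every pair $(u_1,u_2)$ with $\|(u_1,u_2)\|_{A_{p_0}}=1$, for some $1\le p_0<\infty$. Let $1<p,q<\infty$ and let $(u,v)$ be a pair of weights such that $M:L^p(u)\to L^{q,\infty}(v)$ is bounded (i.e. $(u,v)\in A_{p,q}$) and $M:L^{q'}(v^{1-q'})\to L^{p'}(u^{1-p'})$ is bounded (i.e. $(v^{1-q'},u^{1-p'})\in S_{q',p'}$). Then $\|g\|_{L^{q,\infty}(v)}\le C\|f\|_{L^p(u)}$. -/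

import Mathlib

/-!
Fix a level `y` and split `{g > y}` into the part where `Mf > y`, controlled by `(u, v) ∈ A_{p,q}`,
and the part `G` where `Mf ≤ y`. For a bounded minorant `w` of `v · 1_G`, the pair
`(Mw · (1 + f / y)^(1 - p₀), w)` has two-weight `A_{p₀}` constant at most `2^(p₀ - 1)`: on a cube
`Q` meeting the support of `w`, averaging the `(1 - p₀')`-th power of the first weight costs only
the factor `1 + ⨍_Q f / y ≤ 2`. After normalising the constant to `1`, the hypothesis gives
`y ∫ w ≤ 2^(p₀ - 1) ∫ f Mw`. Hölder with the weights `u`, `u^(1 - p')` and the bound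
`(v^(1 - q'), u^(1 - p')) ∈ S_{q',p'}` give `∫ f Mw ≤ C ‖f‖_{L^p(u)} (∫ w)^(1/q')`, because
`w^q' v^(1 - q') ≤ w`. Dividing by `(∫ w)^(1/q')` and letting `w` increase to `v · 1_G` bounds
`y · v(G)^(1/q)`.
-/

open MeasureTheory ENNReal Set

noncomputable section

/-- An axis-parallel cube in `ℝⁿ`. -/
def IsCube {n : ℕ} (Q : Set (Fin n → ℝ)) : Prop :=
  ∃ (a : Fin n → ℝ) (r : ℝ), 0 < r ∧ Q = Set.Icc a (fun i => a i + r)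

/-- Average of `w` over a set `Q` (w.r.t. Lebesgue measure). -/
def cubeAvg {n : ℕ} (w : (Fin n → ℝ) → ℝ≥0∞) (Q : Set (Fin n → ℝ)) : ℝ≥0∞ :=
  (∫⁻ x in Q, w x) / volume Q

/-- Hardy–Littlewood maximal operator (over cubes containing the point). -/
def maxOp {n : ℕ} (f : (Fin n → ℝ) → ℝ≥0∞) (x : Fin n → ℝ) : ℝ≥0∞ :=
  ⨆ (Q : Set (Fin n → ℝ)) (_ : IsCube Q) (_ : x ∈ Q), cubeAvg f Q

/-- `M_μ f = (M(f^{1/μ}))^μ`. -/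
def maxOpP {n : ℕ} (μ : ℝ) (f : (Fin n → ℝ) → ℝ≥0∞) (x : Fin n → ℝ) : ℝ≥0∞ :=
  (maxOp (fun y => f y ^ (1 / μ)) x) ^ μ

/-- Muckenhoupt `A_p` constant; for `p = 1` the least `C` with `Mw ≤ C w` a.e. -/
def apConst {n : ℕ} (p : ℝ) (w : (Fin n → ℝ) → ℝ≥0∞) : ℝ≥0∞ :=
  if p = 1 then
    sInf {C : ℝ≥0∞ | ∀ᵐ x ∂(volume : Measure (Fin n → ℝ)), maxOp w x ≤ C * w x}
  else
    ⨆ (Q : Set (Fin n → ℝ)) (_ : IsCube Q),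
      cubeAvg w Q * (cubeAvg (fun x => w x ^ (-1 / (p - 1))) Q) ^ (p - 1)

/-- `A_∞` "constant": infimum of the `A_p` constants over `p > 1`. -/
def ainfConst {n : ℕ} (w : (Fin n → ℝ) → ℝ≥0∞) : ℝ≥0∞ :=
  ⨅ (p : ℝ) (_ : 1 < p), apConst p w

/-- `u(E) = ∫_E u`. -/
def wMeas {n : ℕ} (w : (Fin n → ℝ) → ℝ≥0∞) (E : Set (Fin n → ℝ)) : ℝ≥0∞ :=
  ∫⁻ x in E, w x

/-- `‖g‖_{L^{p,∞}(w)} = sup_y y · w({g>y})^{1/p}`. -/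
def wkNorm {n : ℕ} (p : ℝ) (w g : (Fin n → ℝ) → ℝ≥0∞) : ℝ≥0∞ :=
  ⨆ y : ℝ≥0∞, y * (wMeas w {x | y < g x}) ^ (1 / p)

/-- `‖f‖_{L^p(w)}`. -/
def stNorm {n : ℕ} (p : ℝ) (w f : (Fin n → ℝ) → ℝ≥0∞) : ℝ≥0∞ :=
  (∫⁻ x, f x ^ p * w x) ^ (1 / p)

/-- A locally bounded function `φ : [0,∞] → [0,∞]`. -/
def LocBdd (φ : ℝ≥0∞ → ℝ≥0∞) : Prop :=
  ∀ M : ℝ≥0∞, M ≠ ⊤ → ∃ C : ℝ≥0∞, C ≠ ⊤ ∧ ∀ t ≤ M, φ t ≤ C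

/-- A (a.e.) positive, locally integrable weight. -/
def PosLocInt {n : ℕ} (u : (Fin n → ℝ) → ℝ≥0∞) : Prop :=
  Measurable u ∧ (∀ᵐ x ∂(volume : Measure (Fin n → ℝ)), 0 < u x) ∧
    ∀ Q : Set (Fin n → ℝ), IsCube Q → (∫⁻ x in Q, u x) < ⊤

end

noncomputable section

/-- Two-weight `A_p` constant of a pair `(u₁, u₂)`; for `p = 1` the least `C`
with `Mu₂ ≤ C u₁` a.e. -/
def twoApC {n : ℕ} (p : ℝ) (u₁ u₂ : (Fin n → ℝ) → ℝ≥0∞) : ℝ≥0∞ :=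
  if p = 1 then
    sInf {C : ℝ≥0∞ | ∀ᵐ x ∂(volume : Measure (Fin n → ℝ)), maxOp u₂ x ≤ C * u₁ x}
  else
    ⨆ (Q : Set (Fin n → ℝ)) (_ : IsCube Q),
      cubeAvg u₂ Q * (cubeAvg (fun x => u₁ x ^ (1 - p / (p - 1))) Q) ^ (p - 1)

namespace ENNReal

theorem rpow_one_add {a : ℝ≥0∞} (ha0 : a ≠ 0) (hat : a ≠ ⊤) (y : ℝ) :
    a ^ (1 + y) = a * a ^ y := by
  rw [rpow_add _ _ ha0 hat, rpow_one]

theorem rpow_le_rpow_of_nonpos {a b : ℝ≥0∞} (hab : a ≤ b) {z : ℝ} (hz : z ≤ 0) :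
    b ^ z ≤ a ^ z := by
  have h := ENNReal.inv_le_inv.2 (rpow_le_rpow hab (neg_nonneg.2 hz))
  rwa [← rpow_neg, ← rpow_neg, neg_neg] at h

theorem add_one_rpow_le_one (a : ℝ≥0∞) {z : ℝ} (hz : z ≤ 0) : (a + 1) ^ z ≤ 1 :=
  (rpow_le_rpow_of_nonpos le_add_self hz).trans_eq (one_rpow z)

theorem rpow_mul_div_add_one_rpow_le {a y : ℝ≥0∞} {p : ℝ} (hp : 1 ≤ p) (hyt : y ≠ ⊤) :
    a ^ p * (a / y + 1) ^ (1 - p) ≤ y ^ (p - 1) * a := by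
  rcases hp.eq_or_lt with rfl | hp
  · simp
  rcases eq_or_ne a 0 with rfl | ha0
  · simp [zero_rpow_of_pos (zero_lt_one.trans hp)]
  rcases eq_or_ne a ⊤ with rfl | hat
  · simp [top_div_of_ne_top hyt, top_rpow_of_neg (by linarith : 1 - p < 0)]
  calc a ^ p * (a / y + 1) ^ (1 - p) ≤ a ^ p * (a * y⁻¹) ^ (1 - p) := by
        rw [← div_eq_mul_inv]
        exact mul_le_mul' le_rfl (rpow_le_rpow_of_nonpos le_self_add (by linarith))
    _ = y ^ (p - 1) * a := by
        rw [mul_rpow_of_ne_zero ha0 (ENNReal.inv_ne_zero.2 hyt), inv_rpow, ← rpow_neg,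
          neg_sub, ← mul_assoc, ← rpow_add _ _ ha0 hat, add_sub_cancel, rpow_one, mul_comm]

theorem rpow_mul_rpow_one_sub_le {a b : ℝ≥0∞} (hab : a ≤ b) {s : ℝ} (hs : 1 < s) :
    a ^ s * b ^ (1 - s) ≤ a := by
  rcases eq_or_ne a 0 with rfl | ha0
  · simp [zero_rpow_of_pos (zero_lt_one.trans hs)]
  rcases eq_or_ne b ⊤ with rfl | hbt
  · simp [top_rpow_of_neg (by linarith : 1 - s < 0)]
  have hb0 : b ≠ 0 := (pos_of_ne_zero ha0 |>.trans_le hab).ne'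
  have hat : a ≠ ⊤ := ne_top_of_le_ne_top hbt hab
  calc a ^ s * b ^ (1 - s) = a * (a ^ (s - 1) * b ^ (1 - s)) := by
        rw [← mul_assoc, ← rpow_one_add ha0 hat, add_sub_cancel]
    _ ≤ a * (b ^ (s - 1) * b ^ (1 - s)) := by gcongr
    _ = a := by rw [← rpow_add _ _ hb0 hbt, sub_add_sub_cancel', sub_self, rpow_zero, mul_one]

end ENNReal

section Holder

variable {α : Type*} [MeasurableSpace α] {μ : Measure α} {p q : ℝ}

theorem ENNReal.mul_le_mul_of_rpow_weight_lt_top (hpq : p.HolderConjugate q)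
    {a b u : ℝ≥0∞} (ha : a ^ p * u < ⊤) (hb : b ^ q * u ^ (1 - q) < ⊤) :
    a * b ≤ (a * u ^ (1 / p)) * (b * (u ^ (1 - q)) ^ (1 / q)) := by
  have hq1 : 1 - q < 0 := by linarith [hpq.symm.lt]
  rcases eq_or_ne u 0 with rfl | hu0
  · obtain rfl : b = 0 := by
      by_contra hb0
      rw [ENNReal.zero_rpow_of_neg hq1,
        ENNReal.mul_top (ENNReal.rpow_pos_of_nonneg (pos_of_ne_zero hb0) hpq.symm.nonneg).ne'] at hb
      exact lt_irrefl _ hb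
    simp
  rcases eq_or_ne u ⊤ with rfl | hut
  · obtain rfl : a = 0 := by
      by_contra ha0
      rw [ENNReal.mul_top (ENNReal.rpow_pos_of_nonneg (pos_of_ne_zero ha0) hpq.nonneg).ne'] at ha
      exact lt_irrefl _ ha
    simp
  have hexp : 1 / p + (1 - q) * (1 / q) = 0 := by
    have := hpq.inv_add_inv_eq_one
    field_simp [hpq.ne_zero, hpq.symm.ne_zero] at this ⊢
    linarith
  rw [← ENNReal.rpow_mul, mul_mul_mul_comm, ← ENNReal.rpow_add _ _ hu0 hut, hexp,
    ENNReal.rpow_zero, mul_one]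

theorem lintegral_mul_le_weighted_Lp_mul_Lq (hpq : p.HolderConjugate q) {f g u : α → ℝ≥0∞}
    (hf : Measurable f) (hg : Measurable g) (hu : Measurable u)
    (hfu : ∫⁻ x, f x ^ p * u x ∂μ ≠ ⊤) (hgu : ∫⁻ x, g x ^ q * u x ^ (1 - q) ∂μ ≠ ⊤) :
    ∫⁻ x, f x * g x ∂μ ≤
      (∫⁻ x, f x ^ p * u x ∂μ) ^ (1 / p) * (∫⁻ x, g x ^ q * u x ^ (1 - q) ∂μ) ^ (1 / q) := by
  have hpow : ∀ {r : ℝ}, 0 < r → ∀ a b : ℝ≥0∞, (a * b ^ (1 / r)) ^ r = a ^ r * b := fun hr a b => by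
    rw [ENNReal.mul_rpow_of_nonneg _ _ hr.le, ← ENNReal.rpow_mul, one_div_mul_cancel hr.ne',
      ENNReal.rpow_one]
  calc ∫⁻ x, f x * g x ∂μ
      ≤ ∫⁻ x, (f x * u x ^ (1 / p)) * (g x * (u x ^ (1 - q)) ^ (1 / q)) ∂μ := by
        refine lintegral_mono_ae ?_
        filter_upwards [ae_lt_top ((hf.pow_const p).mul hu) hfu,
          ae_lt_top ((hg.pow_const q).mul (hu.pow_const _)) hgu] with x hfx hgx
        exact ENNReal.mul_le_mul_of_rpow_weight_lt_top hpq hfx hgx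
    _ ≤ (∫⁻ x, (f x * u x ^ (1 / p)) ^ p ∂μ) ^ (1 / p) *
          (∫⁻ x, (g x * (u x ^ (1 - q)) ^ (1 / q)) ^ q ∂μ) ^ (1 / q) :=
        ENNReal.lintegral_mul_le_Lp_mul_Lq μ hpq (by fun_prop) (by fun_prop)
    _ = _ := by simp only [hpow hpq.pos, hpow hpq.symm.pos]

end Holder

section Truncation

variable {α : Type*} [MeasurableSpace α] {μ : Measure α} [SigmaFinite μ]

theorem mul_lintegral_rpow_le_of_forall_bounded {V : α → ℝ≥0∞} (hV : Measurable V)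
    {y K : ℝ≥0∞} {r : ℝ} (hr : 0 < r)
    (h : ∀ w : α → ℝ≥0∞, Measurable w → w ≤ V → (∃ N, N ≠ ⊤ ∧ ∀ x, w x ≤ N) →
      ∫⁻ x, w x ∂μ ≠ ⊤ → y * (∫⁻ x, w x ∂μ) ^ r ≤ K) :
    y * (∫⁻ x, V x ∂μ) ^ r ≤ K := by
  set cap : ℕ → α → ℝ≥0∞ := fun k => (spanningSets μ k).indicator fun _ => (k : ℝ≥0∞)
  have hcap_mono : Monotone cap := fun k l hkl x =>
    (indicator_le_indicator_of_subset (monotone_spanningSets μ hkl) (fun _ => zero_le) x).trans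
      (indicator_le_indicator (by exact_mod_cast hkl))
  have hcap_top : ∀ x, ⨆ k, cap k x = ⊤ := fun x => by
    obtain ⟨k₀, hk₀⟩ := mem_iUnion.1 ((iUnion_spanningSets μ).symm ▸ mem_univ x)
    refine eq_top_iff.2 <| ENNReal.iSup_natCast ▸ iSup_le fun k => le_iSup_of_le (k + k₀) ?_
    simp only [cap]
    rw [indicator_of_mem (monotone_spanningSets μ (Nat.le_add_left k₀ k) hk₀)]
    exact_mod_cast Nat.le_add_right k k₀
  have hmeas : ∀ k, Measurable fun x => min (V x) (cap k x) := fun k =>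
    hV.min (measurable_const.indicator (measurableSet_spanningSets μ k))
  have hV_eq : ∫⁻ x, V x ∂μ = ⨆ k, ∫⁻ x, min (V x) (cap k x) ∂μ := by
    rw [← lintegral_iSup hmeas fun k l hkl x => min_le_min le_rfl (hcap_mono hkl x)]
    congr with x
    rw [← inf_iSup_eq, hcap_top, inf_top_eq]
  rw [hV_eq, ← ENNReal.orderIsoRpow_apply r hr, OrderIso.map_iSup, ENNReal.mul_iSup]
  refine iSup_le fun k => h _ (hmeas k) (fun x => min_le_left _ _)
    ⟨k, ENNReal.natCast_ne_top k, fun x =>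
      (min_le_right _ _).trans (indicator_le_self' (fun _ _ => zero_le) x)⟩ ?_
  refine ne_top_of_le_ne_top ?_ (lintegral_mono fun x => min_le_right _ _)
  rw [lintegral_indicator_const (measurableSet_spanningSets μ k)]
  exact ENNReal.mul_ne_top (ENNReal.natCast_ne_top k) (measure_spanningSets_lt_top μ k).ne

end Truncation

section Cubes

variable {n : ℕ}

theorem isCube_Icc (a : Fin n → ℝ) {r : ℝ} (hr : 0 < r) : IsCube (Icc a fun i => a i + r) :=
  ⟨a, r, hr, rfl⟩

theorem volume_Icc_add (a : Fin n → ℝ) (r : ℝ) :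
    volume (Icc a fun i => a i + r) = ENNReal.ofReal r ^ n := by
  simp [Real.volume_Icc_pi]

theorem IsCube.volume_ne_zero {Q : Set (Fin n → ℝ)} (hQ : IsCube Q) : volume Q ≠ 0 := by
  obtain ⟨a, r, hr, rfl⟩ := hQ
  simp [volume_Icc_add, hr]

theorem IsCube.volume_ne_top {Q : Set (Fin n → ℝ)} (hQ : IsCube Q) : volume Q ≠ ⊤ := by
  obtain ⟨a, r, -, rfl⟩ := hQ
  exact isCompact_Icc.measure_ne_top

theorem exists_isCube_mem_setLIntegral_ne_zero {w : (Fin n → ℝ) → ℝ≥0∞} (hw : ∫⁻ x, w x ≠ 0)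
    (x : Fin n → ℝ) : ∃ Q, IsCube Q ∧ x ∈ Q ∧ ∫⁻ z in Q, w z ≠ 0 := by
  by_contra! h
  have hball : ∀ k : ℕ, ∫⁻ z in Metric.closedBall x k, w z = 0 := fun k => by
    refine nonpos_iff_eq_zero.1 <| (lintegral_mono_set ?_).trans
      (h _ (isCube_Icc (fun i => x i - k) (by positivity : (0 : ℝ) < 2 * k + 1)) ?_).le
    · intro z hz
      have hzi := fun i =>
        abs_sub_le_iff.1 ((dist_le_pi_dist z x i).trans (Metric.mem_closedBall.1 hz))
      exact ⟨fun i => by linarith [hzi i], fun i => by linarith [hzi i]⟩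
    · exact ⟨fun i => by simp, fun i => by simp only; linarith⟩
  apply hw
  rw [← setLIntegral_univ, ← Metric.iUnion_closedBall_nat x]
  exact nonpos_iff_eq_zero.1 <| (lintegral_iUnion_le _ _).trans (by simp [hball])

end Cubes

section MaximalFunction

variable {n : ℕ}

theorem cubeAvg_le_maxOp (w : (Fin n → ℝ) → ℝ≥0∞) {Q : Set (Fin n → ℝ)} {x : Fin n → ℝ}
    (hQ : IsCube Q) (hx : x ∈ Q) : cubeAvg w Q ≤ maxOp w x :=
  le_iSup₂_of_le Q hQ (le_iSup_of_le hx le_rfl)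

theorem lowerSemicontinuous_maxOp (w : (Fin n → ℝ) → ℝ≥0∞) : LowerSemicontinuous (maxOp w) := by
  intro x t ht
  obtain ⟨Q, hQ, hxQ, htQ⟩ : ∃ Q, IsCube Q ∧ x ∈ Q ∧ t < cubeAvg w Q := by
    simpa only [maxOp, lt_iSup_iff, exists_prop] using ht
  obtain ⟨a, r, hr, rfl⟩ := hQ
  have hr' : ENNReal.ofReal r ^ n ≠ 0 := by simp [hr]
  rw [cubeAvg, volume_Icc_add, ENNReal.lt_div_iff_mul_lt (Or.inl hr') (Or.inl (by simp))] at htQ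
  -- enlarge the cube slightly: the average barely drops and the new cube is a neighbourhood of `x`
  have hcont : ContinuousAt (fun s : ℝ => t * ENNReal.ofReal s ^ n) r :=
    ((ENNReal.continuous_const_mul ht.ne_top).comp
      ((ENNReal.continuous_pow n).comp ENNReal.continuous_ofReal)).continuousAt
  obtain ⟨s, hts, hrs : r < s⟩ := (((hcont.eventually (gt_mem_nhds htQ)).filter_mono
    nhdsWithin_le_nhds).and (self_mem_nhdsWithin (s := Ioi r))).exists
  set δ := (s - r) / 2
  have hδ : 2 * δ = s - r := by simp only [δ]; ring
  have hδ0 : 0 < δ := by linarith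
  filter_upwards [Metric.ball_mem_nhds x hδ0] with z hz
  have hQQ' : (Icc a fun i => a i + r) ⊆ Icc (fun i => a i - δ) fun i => (a i - δ) + s :=
    Icc_subset_Icc (fun i => by simp only; linarith) (fun i => by simp only; linarith)
  have hzQ' : z ∈ Icc (fun i => a i - δ) fun i => (a i - δ) + s := by
    have hzi := fun i => abs_sub_lt_iff.1 ((dist_le_pi_dist z x i).trans_lt (Metric.mem_ball.1 hz))
    exact ⟨fun i => by linarith [hzi i, hxQ.1 i], fun i => by simp only; linarith [hzi i, hxQ.2 i]⟩
  calc t < (∫⁻ y in Icc a fun i => a i + r, w y) / ENNReal.ofReal s ^ n := by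
        rwa [ENNReal.lt_div_iff_mul_lt (Or.inl (by simp [hr.trans hrs])) (Or.inl (by simp))]
    _ ≤ cubeAvg w (Icc (fun i => a i - δ) fun i => (a i - δ) + s) := by
        rw [cubeAvg, volume_Icc_add]
        exact ENNReal.div_le_div_right (lintegral_mono_set hQQ') _
    _ ≤ maxOp w z := cubeAvg_le_maxOp w (isCube_Icc (r := s) _ (by linarith)) hzQ'

theorem measurable_maxOp (w : (Fin n → ℝ) → ℝ≥0∞) : Measurable (maxOp w) :=
  (lowerSemicontinuous_maxOp w).measurable

theorem maxOp_le_of_le {w : (Fin n → ℝ) → ℝ≥0∞} {N : ℝ≥0∞} (hw : ∀ x, w x ≤ N)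
    (x : Fin n → ℝ) : maxOp w x ≤ N :=
  iSup₂_le fun Q _ => iSup_le fun _ => ENNReal.div_le_of_le_mul <|
    (setLIntegral_mono measurable_const fun x _ => hw x).trans_eq (setLIntegral_const Q N)

theorem maxOp_pos {w : (Fin n → ℝ) → ℝ≥0∞} (hw : ∫⁻ x, w x ≠ 0) (x : Fin n → ℝ) :
    0 < maxOp w x := by
  obtain ⟨Q, hQ, hxQ, hQw⟩ := exists_isCube_mem_setLIntegral_ne_zero hw x
  exact (ENNReal.div_pos hQw hQ.volume_ne_top).trans_le (cubeAvg_le_maxOp w hQ hxQ)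

end MaximalFunction

section TwoWeight

variable {n : ℕ}

theorem cubeAvg_mono_on {a b : (Fin n → ℝ) → ℝ≥0∞} {Q : Set (Fin n → ℝ)} (hb : Measurable b)
    (h : ∀ x ∈ Q, a x ≤ b x) : cubeAvg a Q ≤ cubeAvg b Q :=
  ENNReal.div_le_div_right (setLIntegral_mono hb h) _

theorem cubeAvg_const_mul {c : ℝ≥0∞} (hc : c ≠ ⊤) (w : (Fin n → ℝ) → ℝ≥0∞)
    (Q : Set (Fin n → ℝ)) : cubeAvg (fun x => c * w x) Q = c * cubeAvg w Q := by
  rw [cubeAvg, cubeAvg, lintegral_const_mul' c _ hc, mul_div_assoc]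

theorem cubeAvg_add_const {Q : Set (Fin n → ℝ)} (hQ : IsCube Q) (w : (Fin n → ℝ) → ℝ≥0∞)
    (c : ℝ≥0∞) : cubeAvg (fun x => w x + c) Q = cubeAvg w Q + c := by
  rw [cubeAvg, cubeAvg, lintegral_add_right _ measurable_const, setLIntegral_const,
    ENNReal.add_div, ENNReal.mul_div_cancel_right hQ.volume_ne_zero hQ.volume_ne_top]

theorem cubeAvg_const {Q : Set (Fin n → ℝ)} (hQ : IsCube Q) (c : ℝ≥0∞) :
    cubeAvg (fun _ => c) Q = c := by
  rw [cubeAvg, setLIntegral_const, ENNReal.mul_div_cancel_right hQ.volume_ne_zero hQ.volume_ne_top]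

theorem twoApC_one_maxOp {w : (Fin n → ℝ) → ℝ≥0∞} (hpos : ∀ x, maxOp w x ≠ 0)
    (hfin : ∀ x, maxOp w x ≠ ⊤) : twoApC 1 (maxOp w) w = 1 := by
  rw [twoApC, if_pos rfl]
  refine le_antisymm (sInf_le (ae_of_all _ fun x => (one_mul _).ge)) (le_sInf fun C hC => ?_)
  obtain ⟨x, hx⟩ := (show ∀ᵐ x, maxOp w x ≤ C * maxOp w x from hC).exists
  rwa [← ENNReal.mul_le_mul_iff_left (hpos x) (hfin x), one_mul]

theorem twoApC_const_mul {p : ℝ} (hp : 1 < p) {c : ℝ≥0∞} (hc0 : c ≠ 0) (hct : c ≠ ⊤)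
    (u₁ u₂ : (Fin n → ℝ) → ℝ≥0∞) :
    twoApC p (fun x => c * u₁ x) u₂ = c⁻¹ * twoApC p u₁ u₂ := by
  have hβ : (1 - p / (p - 1)) * (p - 1) = -1 := by
    field_simp [(by linarith : p - 1 ≠ 0)]; ring
  have hmul : ∀ a : ℝ≥0∞,
      (c * a) ^ (1 - p / (p - 1)) = c ^ (1 - p / (p - 1)) * a ^ (1 - p / (p - 1)) :=
    fun a => by rw [ENNReal.mul_rpow_eq_ite, if_neg (by simp [hc0, hct])]
  simp only [twoApC, if_neg hp.ne', ENNReal.mul_iSup]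
  refine iSup_congr fun Q => iSup_congr fun _ => ?_
  simp only [hmul]
  rw [cubeAvg_const_mul (ENNReal.rpow_ne_top_of_ne_zero hc0 hct),
    ENNReal.mul_rpow_of_nonneg _ _ (by linarith : (0 : ℝ) ≤ p - 1), ← ENNReal.rpow_mul, hβ,
    ENNReal.rpow_neg_one, mul_left_comm]

end TwoWeight

section TestWeight

variable {n : ℕ} {p₀ : ℝ} {f w : (Fin n → ℝ) → ℝ≥0∞} {y N : ℝ≥0∞}

def testWeight (p₀ : ℝ) (f w : (Fin n → ℝ) → ℝ≥0∞) (y : ℝ≥0∞) (x : Fin n → ℝ) : ℝ≥0∞ :=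
  maxOp w x * (f x / y + 1) ^ (1 - p₀)

theorem measurable_testWeight (hf : Measurable f) : Measurable (testWeight p₀ f w y) :=
  (measurable_maxOp w).mul ((hf.div_const y).add measurable_const |>.pow_const _)

theorem testWeight_le (hp₀ : 1 ≤ p₀) (hwN : ∀ x, w x ≤ N) (x : Fin n → ℝ) :
    testWeight p₀ f w y x ≤ N :=
  mul_le_of_le_of_le_one (maxOp_le_of_le hwN x) (ENNReal.add_one_rpow_le_one _ (by linarith))

theorem rpow_mul_testWeight_le (hp₀ : 1 ≤ p₀) (hyt : y ≠ ⊤) (x : Fin n → ℝ) :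
    f x ^ p₀ * testWeight p₀ f w y x ≤ y ^ (p₀ - 1) * (f x * maxOp w x) := by
  calc f x ^ p₀ * testWeight p₀ f w y x = f x ^ p₀ * (f x / y + 1) ^ (1 - p₀) * maxOp w x := by
        rw [testWeight]; ring
    _ ≤ y ^ (p₀ - 1) * f x * maxOp w x :=
        mul_le_mul' (ENNReal.rpow_mul_div_add_one_rpow_le hp₀ hyt) le_rfl
    _ = y ^ (p₀ - 1) * (f x * maxOp w x) := mul_assoc _ _ _

theorem testWeight_rpow (hp₀ : 1 < p₀) {x : Fin n → ℝ} (hx : maxOp w x ≠ ⊤) :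
    testWeight p₀ f w y x ^ (1 - p₀ / (p₀ - 1)) =
      maxOp w x ^ (1 - p₀ / (p₀ - 1)) * (f x / y + 1) := by
  have hβ : (1 - p₀) * (1 - p₀ / (p₀ - 1)) = 1 := by
    field_simp [(by linarith : p₀ - 1 ≠ 0)]; ring
  rw [testWeight, ENNReal.mul_rpow_of_ne_top hx (ne_top_of_le_ne_top ENNReal.one_ne_top
      (ENNReal.add_one_rpow_le_one _ (by linarith))), ← ENNReal.rpow_mul, hβ, ENNReal.rpow_one]

theorem twoApC_testWeight_le (hp₀ : 1 < p₀) (hf : Measurable f) (hy0 : y ≠ 0) (hyt : y ≠ ⊤)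
    (hwN : ∀ x, w x ≤ N) (hNt : N ≠ ⊤) (hsupp : ∀ x, w x ≠ 0 → maxOp f x ≤ y) :
    twoApC p₀ (testWeight p₀ f w y) w ≤ 2 ^ (p₀ - 1) := by
  set β := 1 - p₀ / (p₀ - 1)
  have hβ : β * (p₀ - 1) = -1 := by
    simp only [β]; field_simp [(by linarith : p₀ - 1 ≠ 0)]; ring
  have hβ0 : β ≤ 0 := by nlinarith
  rw [twoApC, if_neg hp₀.ne']
  refine iSup₂_le fun Q hQ => ?_
  rcases eq_or_ne (∫⁻ x in Q, w x) 0 with hQ0 | hQ0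
  · simp [cubeAvg, hQ0]
  obtain ⟨z, hzQ, hz⟩ : ∃ z ∈ Q, w z ≠ 0 := by
    by_contra! h
    exact hQ0 <| nonpos_iff_eq_zero.1 <|
      (setLIntegral_mono measurable_const fun x hx => (h x hx).le).trans_eq (by simp)
  set A := cubeAvg w Q
  have hA0 : A ≠ 0 := (ENNReal.div_pos hQ0 hQ.volume_ne_top).ne'
  have hAt : A ≠ ⊤ :=
    ne_top_of_le_ne_top hNt ((cubeAvg_le_maxOp w hQ hzQ).trans (maxOp_le_of_le hwN z))
  have hfQ : cubeAvg f Q ≤ y := (cubeAvg_le_maxOp f hQ hzQ).trans (hsupp z hz)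
  have havg : cubeAvg (fun x => testWeight p₀ f w y x ^ β) Q ≤ A ^ β * 2 :=
    calc cubeAvg (fun x => testWeight p₀ f w y x ^ β) Q
        ≤ cubeAvg (fun x => A ^ β * (y⁻¹ * f x + 1)) Q := by
          refine cubeAvg_mono_on (by fun_prop) fun x hx => ?_
          rw [testWeight_rpow hp₀ (ne_top_of_le_ne_top hNt (maxOp_le_of_le hwN x)),
            ENNReal.div_eq_inv_mul]
          exact mul_le_mul' (ENNReal.rpow_le_rpow_of_nonpos (cubeAvg_le_maxOp w hQ hx) hβ0) le_rfl
      _ = A ^ β * (y⁻¹ * cubeAvg f Q + 1) := by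
          rw [cubeAvg_const_mul (ENNReal.rpow_ne_top_of_ne_zero hA0 hAt), cubeAvg_add_const hQ,
            cubeAvg_const_mul (ENNReal.inv_ne_top.2 hy0)]
      _ ≤ A ^ β * 2 := by
          gcongr
          calc y⁻¹ * cubeAvg f Q + 1 ≤ y⁻¹ * y + 1 := by gcongr
            _ = 2 := by rw [ENNReal.inv_mul_cancel hy0 hyt, one_add_one_eq_two]
  calc A * cubeAvg (fun x => testWeight p₀ f w y x ^ β) Q ^ (p₀ - 1)
      ≤ A * (A ^ β * 2) ^ (p₀ - 1) := by gcongr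
    _ = 2 ^ (p₀ - 1) := by
        rw [ENNReal.mul_rpow_of_nonneg _ _ (by linarith), ← ENNReal.rpow_mul, hβ,
          ENNReal.rpow_neg_one, ← mul_assoc, ENNReal.mul_inv_cancel hA0 hAt, one_mul]

theorem twoApC_testWeight_ne_zero (hp₀ : 1 < p₀) (hf : Measurable f) (hwN : ∀ x, w x ≤ N)
    (hNt : N ≠ ⊤) (hw0 : ∫⁻ x, w x ≠ 0) : twoApC p₀ (testWeight p₀ f w y) w ≠ 0 := by
  set β := 1 - p₀ / (p₀ - 1)
  have hβ0 : β < 0 := by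
    have : 1 < p₀ / (p₀ - 1) := (one_lt_div (by linarith)).2 (by linarith)
    linarith
  obtain ⟨Q, hQ, -, hQ0⟩ := exists_isCube_mem_setLIntegral_ne_zero hw0 0
  have hNβ : N ^ β ≠ 0 := by simp [ENNReal.rpow_eq_zero_iff, hNt, hβ0.not_gt]
  have havg : N ^ β ≤ cubeAvg (fun x => testWeight p₀ f w y x ^ β) Q := by
    rw [← cubeAvg_const hQ (N ^ β)]
    exact cubeAvg_mono_on ((measurable_testWeight hf).pow_const β) fun x _ =>
      ENNReal.rpow_le_rpow_of_nonpos (testWeight_le hp₀.le hwN x) hβ0.le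
  rw [twoApC, if_neg hp₀.ne']
  refine (lt_of_lt_of_le ?_ (le_iSup₂_of_le Q hQ le_rfl)).ne'
  exact ENNReal.mul_pos (ENNReal.div_pos hQ0 hQ.volume_ne_top).ne'
    (ENNReal.rpow_pos_of_nonneg (pos_of_ne_zero hNβ |>.trans_le havg) (by linarith)).ne'

theorem exists_twoApC_eq_one (hp₀ : 1 ≤ p₀) (hf : Measurable f) (hy0 : y ≠ 0) (hyt : y ≠ ⊤)
    (hwN : ∀ x, w x ≤ N) (hNt : N ≠ ⊤) (hw0 : ∫⁻ x, w x ≠ 0)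
    (hsupp : ∀ x, w x ≠ 0 → maxOp f x ≤ y) :
    ∃ u₁, Measurable u₁ ∧ twoApC p₀ u₁ w = 1 ∧
      ∫⁻ x, f x ^ p₀ * u₁ x ≤ 2 ^ (p₀ - 1) * (y ^ (p₀ - 1) * ∫⁻ x, f x * maxOp w x) := by
  rcases hp₀.eq_or_lt with rfl | hp₀
  · refine ⟨maxOp w, measurable_maxOp w, twoApC_one_maxOp (fun x => (maxOp_pos hw0 x).ne')
      (fun x => ne_top_of_le_ne_top hNt (maxOp_le_of_le hwN x)), ?_⟩
    simp
  set A := twoApC p₀ (testWeight p₀ f w y) w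
  have hA0 : A ≠ 0 := twoApC_testWeight_ne_zero hp₀ hf hwN hNt hw0
  have hA2 : A ≤ 2 ^ (p₀ - 1) := twoApC_testWeight_le hp₀ hf hy0 hyt hwN hNt hsupp
  have hAt : A ≠ ⊤ := ne_top_of_le_ne_top (by finiteness) hA2
  refine ⟨fun x => A * testWeight p₀ f w y x, measurable_const.mul (measurable_testWeight hf),
    by rw [twoApC_const_mul hp₀ hA0 hAt, ENNReal.inv_mul_cancel hA0 hAt], ?_⟩
  calc ∫⁻ x, f x ^ p₀ * (A * testWeight p₀ f w y x)
      = A * ∫⁻ x, f x ^ p₀ * testWeight p₀ f w y x := by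
        rw [← lintegral_const_mul' _ _ hAt]; simp only [mul_left_comm]
    _ ≤ 2 ^ (p₀ - 1) * ∫⁻ x, y ^ (p₀ - 1) * (f x * maxOp w x) :=
        mul_le_mul' hA2 (lintegral_mono fun x => rpow_mul_testWeight_le hp₀.le hyt x)
    _ = 2 ^ (p₀ - 1) * (y ^ (p₀ - 1) * ∫⁻ x, f x * maxOp w x) := by
        rw [lintegral_const_mul' _ _ (by finiteness)]

end TestWeight

section WeakType

variable {n : ℕ}

theorem mul_rpow_wMeas_le_wkNorm (p : ℝ) (w g : (Fin n → ℝ) → ℝ≥0∞) (y : ℝ≥0∞) :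
    y * wMeas w {x | y < g x} ^ (1 / p) ≤ wkNorm p w g :=
  le_iSup (fun y => y * wMeas w {x | y < g x} ^ (1 / p)) y

theorem wkNorm_le_of_forall {p : ℝ} (hp : 0 < p) {w g : (Fin n → ℝ) → ℝ≥0∞} {K : ℝ≥0∞}
    (h : ∀ y, y ≠ 0 → y ≠ ⊤ → y * wMeas w {x | y < g x} ^ (1 / p) ≤ K) : wkNorm p w g ≤ K := by
  refine iSup_le fun y => ?_
  rcases eq_or_ne y 0 with rfl | hy0
  · simp
  rcases eq_or_ne y ⊤ with rfl | hyt
  · simp [wMeas, ENNReal.zero_rpow_of_pos (inv_pos.2 hp)]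
  exact h y hy0 hyt

theorem mul_rpow_wMeas_le_add (p : ℝ) (hp : 1 ≤ p) (v : (Fin n → ℝ) → ℝ≥0∞) (y : ℝ≥0∞)
    (E A : Set (Fin n → ℝ)) :
    y * wMeas v E ^ (1 / p) ≤ y * wMeas v A ^ (1 / p) + y * wMeas v (E \ A) ^ (1 / p) := by
  have hsplit : wMeas v E ≤ wMeas v A + wMeas v (E \ A) :=
    (lintegral_mono_set (subset_union_right.trans union_sdiff_self.superset)).trans
      (lintegral_union_le _ _ _)
  rw [← mul_add]
  gcongr
  exact (ENNReal.rpow_le_rpow hsplit (by positivity)).trans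
    (ENNReal.rpow_add_le_add_rpow _ _ (by positivity) ((div_le_one (by linarith)).2 hp))

end WeakType

section Extrapolation

variable {n : ℕ} {p₀ : ℝ} {f g w : (Fin n → ℝ) → ℝ≥0∞} {y N : ℝ≥0∞}

theorem mul_lintegral_le_of_twoWeight (hp₀ : 1 ≤ p₀) (hf : Measurable f)
    (H : ∀ u₁ u₂ : (Fin n → ℝ) → ℝ≥0∞, Measurable u₁ → Measurable u₂ →
      twoApC p₀ u₁ u₂ = 1 → wkNorm p₀ u₂ g ≤ stNorm p₀ u₁ f)
    (hw : Measurable w) (hwN : ∀ x, w x ≤ N) (hNt : N ≠ ⊤) (hy0 : y ≠ 0) (hyt : y ≠ ⊤)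
    (hsupp : ∀ x, w x ≠ 0 → y < g x ∧ maxOp f x ≤ y) :
    y * ∫⁻ x, w x ≤ 2 ^ (p₀ - 1) * ∫⁻ x, f x * maxOp w x := by
  rcases eq_or_ne (∫⁻ x, w x) 0 with hw0 | hw0
  · simp [hw0]
  obtain ⟨u₁, hu₁, hA, hu₁f⟩ :=
    exists_twoApC_eq_one hp₀ hf hy0 hyt hwN hNt hw0 fun x hx => (hsupp x hx).2
  have hp₀' : 0 < 1 / p₀ := by positivity
  have hE : wMeas w {x | y < g x} = ∫⁻ x, w x :=
    setLIntegral_eq_of_support_subset fun x hx => (hsupp x hx).1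
  have hy : y ^ p₀ = y ^ (p₀ - 1) * y := by
    rw [mul_comm, ← ENNReal.rpow_one_add hy0 hyt, add_sub_cancel]
  have key : (y ^ (p₀ - 1) * (y * ∫⁻ x, w x)) ^ (1 / p₀) ≤
      (y ^ (p₀ - 1) * (2 ^ (p₀ - 1) * ∫⁻ x, f x * maxOp w x)) ^ (1 / p₀) :=
    calc (y ^ (p₀ - 1) * (y * ∫⁻ x, w x)) ^ (1 / p₀)
        = y * wMeas w {x | y < g x} ^ (1 / p₀) := by
          rw [← mul_assoc, ← hy, ENNReal.mul_rpow_of_nonneg _ _ hp₀'.le, ← ENNReal.rpow_mul,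
            mul_one_div_cancel (by positivity), ENNReal.rpow_one, hE]
      _ ≤ stNorm p₀ u₁ f := (mul_rpow_wMeas_le_wkNorm p₀ w g y).trans (H u₁ w hu₁ hw hA)
      _ ≤ _ := ENNReal.rpow_le_rpow (hu₁f.trans_eq (mul_left_comm _ _ _)) hp₀'.le
  rwa [ENNReal.rpow_le_rpow_iff hp₀', ENNReal.mul_le_mul_iff_right
    (ENNReal.rpow_pos (pos_of_ne_zero hy0) hyt).ne' (ENNReal.rpow_ne_top_of_ne_zero hy0 hyt)] at key

theorem mul_lintegral_rpow_le_of_twoWeight_of_dual {p q : ℝ} (hp₀ : 1 ≤ p₀) (hp : 1 < p)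
    (hq : 1 < q) {u v : (Fin n → ℝ) → ℝ≥0∞} (hf : Measurable f) (hu : Measurable u)
    (H : ∀ u₁ u₂ : (Fin n → ℝ) → ℝ≥0∞, Measurable u₁ → Measurable u₂ →
      twoApC p₀ u₁ u₂ = 1 → wkNorm p₀ u₂ g ≤ stNorm p₀ u₁ f)
    {C : ℝ≥0∞} (hCt : C ≠ ⊤) (hS : ∀ h : (Fin n → ℝ) → ℝ≥0∞, Measurable h →
      stNorm (p / (p - 1)) (fun x => u x ^ (1 - p / (p - 1))) (maxOp h)
        ≤ C * stNorm (q / (q - 1)) (fun x => v x ^ (1 - q / (q - 1))) h)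
    (hfu : ∫⁻ x, f x ^ p * u x ≠ ⊤)
    (hw : Measurable w) (hwN : ∀ x, w x ≤ N) (hNt : N ≠ ⊤) (hwt : ∫⁻ x, w x ≠ ⊤)
    (hwv : ∀ x, w x ≤ v x) (hy0 : y ≠ 0) (hyt : y ≠ ⊤)
    (hsupp : ∀ x, w x ≠ 0 → y < g x ∧ maxOp f x ≤ y) :
    y * (∫⁻ x, w x) ^ (1 / q) ≤ 2 ^ (p₀ - 1) * C * stNorm p u f := by
  set W := ∫⁻ x, w x
  rcases eq_or_ne W 0 with hW0 | hW0
  · simp [hW0, ENNReal.zero_rpow_of_pos (inv_pos.2 (zero_lt_one.trans hq))]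
  have hpp' : p.HolderConjugate (p / (p - 1)) := .conjExponent hp
  set q' := q / (q - 1)
  have hqq' : q.HolderConjugate q' := .conjExponent hq
  have hdual : stNorm (p / (p - 1)) (fun x => u x ^ (1 - p / (p - 1))) (maxOp w) ≤
      C * W ^ (1 / q') :=
    (hS w hw).trans <| mul_le_mul' le_rfl <| ENNReal.rpow_le_rpow
      (lintegral_mono fun x => ENNReal.rpow_mul_rpow_one_sub_le (hwv x) hqq'.symm.lt)
      (by positivity)
  have hMw : ∫⁻ x, maxOp w x ^ (p / (p - 1)) * u x ^ (1 - p / (p - 1)) ≠ ⊤ := by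
    refine (ENNReal.rpow_eq_top_iff_of_pos (by positivity : 0 < 1 / (p / (p - 1)))).not.1 ?_
    exact ne_top_of_le_ne_top (ENNReal.mul_ne_top hCt (by finiteness)) hdual
  have hWq : W = W ^ (1 / q) * W ^ (1 / q') := by
    rw [← ENNReal.rpow_add _ _ hW0 hwt, one_div, one_div, hqq'.inv_add_inv_eq_one, ENNReal.rpow_one]
  have key : y * W ^ (1 / q) * W ^ (1 / q') ≤ 2 ^ (p₀ - 1) * C * stNorm p u f * W ^ (1 / q') :=
    calc y * W ^ (1 / q) * W ^ (1 / q') = y * W := by rw [mul_assoc, ← hWq]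
      _ ≤ 2 ^ (p₀ - 1) * ∫⁻ x, f x * maxOp w x :=
          mul_lintegral_le_of_twoWeight hp₀ hf H hw hwN hNt hy0 hyt hsupp
      _ ≤ 2 ^ (p₀ - 1) * (stNorm p u f *
            stNorm (p / (p - 1)) (fun x => u x ^ (1 - p / (p - 1))) (maxOp w)) :=
          mul_le_mul' le_rfl <|
            lintegral_mul_le_weighted_Lp_mul_Lq hpp' hf (measurable_maxOp w) hu hfu hMw
      _ ≤ 2 ^ (p₀ - 1) * (stNorm p u f * (C * W ^ (1 / q'))) := by gcongr
      _ = 2 ^ (p₀ - 1) * C * stNorm p u f * W ^ (1 / q') := by ring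
  exact (ENNReal.mul_le_mul_iff_left (by simp [ENNReal.rpow_eq_zero_iff, hW0, hwt])
    (by simp [ENNReal.rpow_eq_top_iff, hW0, hwt])).1 key

end Extrapolation

theorem mul_rpow_wMeas_diff_le {n : ℕ} {p₀ p q : ℝ} (hp₀ : 1 ≤ p₀) (hp : 1 < p) (hq : 1 < q)
    {f g u v : (Fin n → ℝ) → ℝ≥0∞} (hf : Measurable f) (hg : Measurable g) (hu : Measurable u)
    (hv : Measurable v)
    (H : ∀ u₁ u₂ : (Fin n → ℝ) → ℝ≥0∞, Measurable u₁ → Measurable u₂ →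
      twoApC p₀ u₁ u₂ = 1 → wkNorm p₀ u₂ g ≤ stNorm p₀ u₁ f)
    {C : ℝ≥0∞} (hCt : C ≠ ⊤) (hS : ∀ h : (Fin n → ℝ) → ℝ≥0∞, Measurable h →
      stNorm (p / (p - 1)) (fun x => u x ^ (1 - p / (p - 1))) (maxOp h)
        ≤ C * stNorm (q / (q - 1)) (fun x => v x ^ (1 - q / (q - 1))) h)
    (hfu : ∫⁻ x, f x ^ p * u x ≠ ⊤) {y : ℝ≥0∞} (hy0 : y ≠ 0) (hyt : y ≠ ⊤) :
    y * wMeas v ({x | y < g x} \ {x | y < maxOp f x}) ^ (1 / q) ≤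
      2 ^ (p₀ - 1) * C * stNorm p u f := by
  have hG : MeasurableSet ({x | y < g x} \ {x | y < maxOp f x}) :=
    (measurableSet_lt measurable_const hg).diff
      (measurableSet_lt measurable_const (measurable_maxOp f))
  rw [wMeas, ← lintegral_indicator hG]
  refine mul_lintegral_rpow_le_of_forall_bounded (hv.indicator hG) (by positivity)
    fun w hw hwG ⟨N, hNt, hwN⟩ hwt => ?_
  refine mul_lintegral_rpow_le_of_twoWeight_of_dual hp₀ hp hq hf hu H hCt hS hfu hw hwN hNt hwt
    (fun x => (hwG x).trans (indicator_le_self' (fun _ _ => zero_le) x)) hy0 hyt fun x hx => ?_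
  have hxG : x ∈ {x | y < g x} \ {x | y < maxOp f x} := by
    by_contra hxG
    exact hx (nonpos_iff_eq_zero.1 ((hwG x).trans_eq (indicator_of_notMem hxG _)))
  exact ⟨hxG.1, not_lt.1 hxG.2⟩

theorem stmt9 {n : ℕ} (p₀ : ℝ) (hp₀ : 1 ≤ p₀)
    (f g : (Fin n → ℝ) → ℝ≥0∞) (hf : Measurable f) (hg : Measurable g)
    (H : ∀ u₁ u₂ : (Fin n → ℝ) → ℝ≥0∞, Measurable u₁ → Measurable u₂ →
      twoApC p₀ u₁ u₂ = 1 → wkNorm p₀ u₂ g ≤ stNorm p₀ u₁ f)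
    (p q : ℝ) (hp : 1 < p) (hq : 1 < q)
    (u v : (Fin n → ℝ) → ℝ≥0∞) (hu : Measurable u) (hv : Measurable v)
    -- (u,v) ∈ A_{p,q} : M : L^p(u) → L^{q,∞}(v)
    (hApq : ∃ C : ℝ≥0∞, C < ⊤ ∧ ∀ h : (Fin n → ℝ) → ℝ≥0∞, Measurable h →
      wkNorm q v (maxOp h) ≤ C * stNorm p u h)
    -- (v^{1-q'}, u^{1-p'}) ∈ S_{q',p'} : M : L^{q'}(v^{1-q'}) → L^{p'}(u^{1-p'})
    (hS : ∃ C : ℝ≥0∞, C < ⊤ ∧ ∀ h : (Fin n → ℝ) → ℝ≥0∞, Measurable h →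
      stNorm (p / (p - 1)) (fun x => u x ^ (1 - p / (p - 1))) (maxOp h)
        ≤ C * stNorm (q / (q - 1)) (fun x => v x ^ (1 - q / (q - 1))) h) :
    ∃ C : ℝ≥0∞, C < ⊤ ∧ wkNorm q v g ≤ C * stNorm p u f := by
  obtain ⟨C₁, hC₁t, hC₁⟩ := hApq
  obtain ⟨C₂, hC₂t, hC₂⟩ := hS
  rcases eq_or_ne (∫⁻ x, f x ^ p * u x) ⊤ with hfu | hfu
  · refine ⟨1, ENNReal.one_lt_top, ?_⟩
    simp [stNorm, hfu, ENNReal.top_rpow_of_pos (inv_pos.2 (zero_lt_one.trans hp))]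
  refine ⟨C₁ + 2 ^ (p₀ - 1) * C₂, by finiteness,
    wkNorm_le_of_forall (by linarith) fun y hy0 hyt => ?_⟩
  calc y * wMeas v {x | y < g x} ^ (1 / q)
      ≤ y * wMeas v {x | y < maxOp f x} ^ (1 / q) +
          y * wMeas v ({x | y < g x} \ {x | y < maxOp f x}) ^ (1 / q) :=
        mul_rpow_wMeas_le_add q hq.le v y _ _
    _ ≤ C₁ * stNorm p u f + 2 ^ (p₀ - 1) * C₂ * stNorm p u f :=
        add_le_add ((mul_rpow_wMeas_le_wkNorm q v _ y).trans (hC₁ f hf))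
          (mul_rpow_wMeas_diff_le hp₀ hp hq hf hg hu hv H hC₂t.ne hC₂ hfu hy0 hyt)
    _ = (C₁ + 2 ^ (p₀ - 1) * C₂) * stNorm p u f := (add_mul _ _ _).symm

end
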